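/- The function ψ₁(x) = (3/2)(1 − 5 tanh²(x)) sech(x) satisfies −ψ₁'' − 12 sech²(x) ψ₁ = −ψ₁ on ℝ. -/

import Mathlib

/-!
Since `tanh² = 1 - sech²`, `ψ₁ = (15/2) sech³ - 6 sech`. From `sech' = -sinh sech²` and
`cosh² = 1 + sinh²` one gets `(sechⁿ)'' = n² sechⁿ - n(n+1) sech^(n+2)`, i.e. `sechⁿ` solves
`-u'' - n(n+1) sech² u = -n² u`. For `n = 3` the potential is exactly `12 sech²`; for `n = 1` the
excess potential `10 sech²` turns `-6 sech` into `60 sech³`, which the coefficient `15/2` absorbs: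
`-9 · 15/2 + 60 = -15/2`.
-/

open Real

lemma sinh_sq_mul_inv_cosh_sq (x : ℝ) : sinh x ^ 2 * (cosh x)⁻¹ ^ 2 = 1 - (cosh x)⁻¹ ^ 2 := by
  have hc : cosh x ≠ 0 := (cosh_pos x).ne'
  field_simp
  linear_combination -cosh_sq x

lemma hasDerivAt_inv_cosh_pow (n : ℕ) (x : ℝ) :
    HasDerivAt (fun x => (cosh x)⁻¹ ^ n) (-n * sinh x * (cosh x)⁻¹ ^ (n + 1)) x := by
  refine (((hasDerivAt_cosh x).inv (cosh_pos x).ne').pow n).congr_deriv ?_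
  rcases n with _ | n
  · simp
  · rw [div_eq_mul_inv, ← inv_pow, Nat.add_sub_cancel, Pi.inv_apply]
    push_cast
    ring

lemma hasDerivAt_deriv_inv_cosh_pow (n : ℕ) (x : ℝ) :
    HasDerivAt (deriv fun x => (cosh x)⁻¹ ^ n)
      (n ^ 2 * (cosh x)⁻¹ ^ n - n * (n + 1) * (cosh x)⁻¹ ^ (n + 2)) x := by
  have hderiv : (deriv fun x => (cosh x)⁻¹ ^ n) = fun x => -n * sinh x * (cosh x)⁻¹ ^ (n + 1) :=
    funext fun x => (hasDerivAt_inv_cosh_pow n x).deriv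
  rw [hderiv]
  refine (((hasDerivAt_sinh x).const_mul (-n : ℝ)).mul
    (hasDerivAt_inv_cosh_pow (n + 1) x)).congr_deriv ?_
  push_cast
  linear_combination (-n * (cosh x)⁻¹ ^ n) * inv_mul_cancel₀ (cosh_pos x).ne'
    + (n * (n + 1) * (cosh x)⁻¹ ^ n) * sinh_sq_mul_inv_cosh_sq x

/-- `ψ₁(x) = (3/2)(1 − 5 tanh²(x)) sech(x)` satisfies
`−ψ₁'' − 12 sech²(x) ψ₁ = −ψ₁` on `ℝ`. -/
theorem stmt10 (ψ : ℝ → ℝ)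
    (hψ : ∀ x, ψ x = (3 / 2) * (1 - 5 * Real.tanh x ^ 2) * (1 / Real.cosh x)) :
    ∀ x, -deriv (deriv ψ) x - 12 * (1 / Real.cosh x) ^ 2 * ψ x = -ψ x := by
  have hψ_sech : ψ = fun x => 15 / 2 * (cosh x)⁻¹ ^ 3 - 6 * (cosh x)⁻¹ ^ 1 := by
    funext x
    rw [hψ x, tanh_eq_sinh_div_cosh, div_eq_mul_inv, one_div]
    linear_combination (-15 / 2 * (cosh x)⁻¹) * sinh_sq_mul_inv_cosh_sq x
  have hψ' : deriv ψ = fun x =>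
      15 / 2 * deriv (fun x => (cosh x)⁻¹ ^ 3) x - 6 * deriv (fun x => (cosh x)⁻¹ ^ 1) x := by
    funext x
    rw [hψ_sech]
    exact (((hasDerivAt_inv_cosh_pow 3 x).differentiableAt.hasDerivAt.const_mul _).sub
      ((hasDerivAt_inv_cosh_pow 1 x).differentiableAt.hasDerivAt.const_mul _)).deriv
  intro x
  have hψ'' : HasDerivAt (deriv ψ)
      (15 / 2 * (3 ^ 2 * (cosh x)⁻¹ ^ 3 - 3 * (3 + 1) * (cosh x)⁻¹ ^ (3 + 2))
        - 6 * (1 ^ 2 * (cosh x)⁻¹ ^ 1 - 1 * (1 + 1) * (cosh x)⁻¹ ^ (1 + 2))) x := by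
    rw [hψ']
    exact_mod_cast ((hasDerivAt_deriv_inv_cosh_pow 3 x).const_mul _).sub
      ((hasDerivAt_deriv_inv_cosh_pow 1 x).const_mul _)
  rw [hψ''.deriv, hψ_sech, one_div]
  ring
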